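/- The R-matrix R(u) = I + P/u − K/(u+κ) with 2κ = (M−N−2)θ₀ satisfies unitarity: R₁₂(u) R₁₂(−u) = (1 − 1/u²) I. -/

import Mathlib

open Matrix BigOperators Finset

noncomputable section

namespace OspYangian

variable (M N : ℕ) (θ₀ : ℤ)

/-- The grading exponent `[i] ∈ {0,1}`, defined so that `(-1)^[i] = θ₀` for `i < M`
and `(-1)^[i] = -θ₀` for `M ≤ i < M+N` (0-indexed). -/
def gr (i : Fin (M + N)) : ℕ :=
  if (i : ℕ) < M then (if θ₀ = 1 then 0 else 1) else (if θ₀ = 1 then 1 else 0)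

/-- The sign `θ_i`: `+1` for `i < M + N/2`, `-1` otherwise (0-indexed). -/
def th (i : Fin (M + N)) : ℂ :=
  if (i : ℕ) < M + N / 2 then 1 else -1

/-- The conjugate index `ī`: `M+1-i` resp. `2M+N+1-i` in 1-indexed notation. -/
def bar (i : Fin (M + N)) : Fin (M + N) :=
  if _h : (i : ℕ) < M then ⟨M - 1 - (i : ℕ), by omega⟩
  else ⟨2 * M + N - 1 - (i : ℕ), by have := i.isLt; omega⟩

/-- Coefficient matrices of elements of the graded tensor square of `gl(M|N)`:
the entry at `((i,k),(j,l))` is the coefficient of `E_{ij} ⊗ E_{kl}`. -/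
abbrev Mat := Matrix (Fin (M + N) × Fin (M + N)) (Fin (M + N) × Fin (M + N)) ℂ

/-- Multiplication in the graded tensor product algebra:
`(A⊗B)(C⊗D) = (-1)^{[B][C]} AC ⊗ BD` on homogeneous elements. -/
def gmul (A B : Mat M N) : Mat M N := fun p q =>
  ∑ j : Fin (M + N), ∑ l : Fin (M + N),
    (-1 : ℂ) ^ ((gr M N θ₀ p.2 + gr M N θ₀ l) * (gr M N θ₀ j + gr M N θ₀ q.1)) *
      A p (j, l) * B (j, l) q

/-- The superpermutation `P = Σ_{i,j} (-1)^{[j]} E_{ij} ⊗ E_{ji}`. -/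
def P : Mat M N := fun p q =>
  if p.1 = q.2 ∧ p.2 = q.1 then (-1 : ℂ) ^ gr M N θ₀ p.2 else 0

/-- `K = Σ_{i,j} (-1)^{[i][j]} θ_i θ_j E_{j̄ ī} ⊗ E_{ji}`. -/
def K : Mat M N := fun p q =>
  if p.1 = bar M N p.2 ∧ q.1 = bar M N q.2 then
    (-1 : ℂ) ^ (gr M N θ₀ q.2 * gr M N θ₀ p.2) * th M N q.2 * th M N p.2
  else 0

/-- `κ` with `2κ = (M - N - 2)θ₀`. -/
def kap : ℂ := (((M : ℂ) - (N : ℂ) - 2) * (θ₀ : ℂ)) / 2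

/-- The rational R-matrix `R(u) = I + P/u - K/(u+κ)`. -/
def R (u : ℂ) : Mat M N :=
  1 + u⁻¹ • P M N θ₀ - (u + kap M N θ₀)⁻¹ • K M N θ₀

/-!
`R(u) = 1 + u⁻¹ P - (u + κ)⁻¹ K` lies in the span of `1`, `P`, `K`, which the graded product
preserves by the relations `P² = 1`, `PK = KP = θ₀ K`, `K² = θ₀ (M - N) K`. Expanding
`R(u) R(-u)` bilinearly with these relations gives `(1 - u⁻²) 1 + 0 • P + c • K`, and `c`
vanishes precisely because `2κ = (M - N - 2) θ₀`.

The relations are entrywise computations: `P` and `K` each select a single term of the sums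
defining the graded product, and the remaining signs only matter mod 2. For `PK` and `KP` the
sign `(-1)^[i]` turns `θ_ī` into `θ₀ θ_i`: for even `N` the sign `θ` flips exactly in the middle
of the odd block, which `bar` reflects onto itself.
-/

theorem unitarity_of_relations {𝕜 V : Type*} [Field 𝕜] [AddCommGroup V] [Module 𝕜 V]
    (μ : V →ₗ[𝕜] V →ₗ[𝕜] V) {e p k : V} {θ n κ : 𝕜}
    (he : ∀ x, μ e x = x) (he' : ∀ x, μ x e = x) (hpp : μ p p = e)
    (hpk : μ p k = θ • k) (hkp : μ k p = θ • k) (hkk : μ k k = (θ * n) • k)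
    (hκ : 2 * κ = (n - 2) * θ) {u : 𝕜} (hu : u ≠ 0) (huκ : u + κ ≠ 0) (huκ' : u - κ ≠ 0) :
    μ (e + u⁻¹ • p - (u + κ)⁻¹ • k) (e + (-u)⁻¹ • p - (-u + κ)⁻¹ • k) = (1 - 1 / u ^ 2) • e := by
  have hκu : -u + κ ≠ 0 := fun h => huκ' (by linear_combination -h)
  have hcoeff : -(u + κ)⁻¹ - (-u + κ)⁻¹ - (u⁻¹ * (-u + κ)⁻¹ + (u + κ)⁻¹ * (-u)⁻¹) * θ
      + (u + κ)⁻¹ * (-u + κ)⁻¹ * (θ * n) = 0 := by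
    field_simp
    linear_combination (-u) * hκ
  simp only [map_add, map_sub, map_smul, LinearMap.add_apply, LinearMap.sub_apply,
    LinearMap.smul_apply, he, he', hpp, hpk, hkp, hkk, smul_smul]
  linear_combination (norm := module) hcoeff • k

lemma bar_val (i : Fin (M + N)) :
    (bar M N i : ℕ) = if (i : ℕ) < M then M - 1 - i else 2 * M + N - 1 - i := by
  unfold bar; split_ifs <;> rfl

@[simp]
lemma bar_bar (i : Fin (M + N)) : bar M N (bar M N i) = i := by
  have := i.isLt
  ext
  rw [bar_val, bar_val]
  split_ifs <;> omega

lemma eq_bar_comm {i j : Fin (M + N)} : i = bar M N j ↔ j = bar M N i := by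
  constructor <;> (rintro rfl; rw [bar_bar])

@[simp]
lemma gr_bar (i : Fin (M + N)) : gr M N θ₀ (bar M N i) = gr M N θ₀ i := by
  have := i.isLt
  have := bar_val M N i
  unfold gr
  split_ifs at * <;> omega

lemma th_mul_self (i : Fin (M + N)) : th M N i * th M N i = 1 := by
  unfold th; split_ifs <;> norm_num

lemma th_bar (hN : Even N) (i : Fin (M + N)) :
    th M N (bar M N i) = if (i : ℕ) < M then th M N i else -th M N i := by
  obtain ⟨r, hr⟩ := hN
  have := i.isLt
  have := bar_val M N i
  unfold th
  split_ifs at * <;> first | omega | norm_num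

lemma neg_one_pow_gr (hθ : θ₀ = 1 ∨ θ₀ = -1) (i : Fin (M + N)) :
    (-1 : ℂ) ^ gr M N θ₀ i = if (i : ℕ) < M then (θ₀ : ℂ) else -θ₀ := by
  unfold gr
  rcases hθ with rfl | rfl <;> split_ifs <;> simp_all

lemma neg_one_pow_gr_mul_th_bar (hθ : θ₀ = 1 ∨ θ₀ = -1) (hN : Even N) (i : Fin (M + N)) :
    (-1 : ℂ) ^ gr M N θ₀ i * th M N (bar M N i) = θ₀ * th M N i := by
  rw [neg_one_pow_gr M N θ₀ hθ, th_bar M N hN]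
  split_ifs <;> ring

lemma sum_neg_one_pow_gr (hθ : θ₀ = 1 ∨ θ₀ = -1) :
    ∑ i : Fin (M + N), (-1 : ℂ) ^ gr M N θ₀ i = θ₀ * ((M : ℂ) - N) := by
  simp [Fin.sum_univ_add, neg_one_pow_gr M N θ₀ hθ]
  ring

lemma neg_one_pow_mul_self_mul (n : ℕ) : (-1 : ℂ) ^ (n * n) * (-1) ^ n = 1 := by
  rw [← pow_add, ← Nat.mul_succ]
  exact (Nat.even_mul_succ_self n).neg_one_pow

lemma neg_one_pow_add_mul_add (a b c : ℕ) :
    (-1 : ℂ) ^ ((a + b) * (b + c)) * (-1) ^ (b * a) * (-1) ^ (c * b) =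
      (-1) ^ (c * a) * (-1) ^ b := by
  rcases Nat.even_or_odd a with ha | ha <;> rcases Nat.even_or_odd b with hb | hb <;>
    rcases Nat.even_or_odd c with hc | hc <;>
    simp [pow_add, pow_mul, mul_add, add_mul, ha.neg_one_pow, hb.neg_one_pow, hc.neg_one_pow]

def gmulₗ : Mat M N →ₗ[ℂ] Mat M N →ₗ[ℂ] Mat M N :=
  LinearMap.mk₂ ℂ (gmul M N θ₀)
    (fun A B C => by ext; simp only [gmul, Matrix.add_apply, mul_add, add_mul, Finset.sum_add_distrib])
    (fun c A B => by ext; simp [gmul, Finset.mul_sum, mul_assoc, mul_left_comm])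
    (fun A B C => by ext; simp only [gmul, Matrix.add_apply, mul_add, add_mul, Finset.sum_add_distrib])
    (fun c A B => by ext; simp [gmul, Finset.mul_sum, mul_assoc, mul_left_comm])

lemma gmul_one_left (B : Mat M N) : gmul M N θ₀ 1 B = B := by
  ext p q
  simp [gmul, Matrix.one_apply, Prod.ext_iff, ite_and]

lemma gmul_one_right (A : Mat M N) : gmul M N θ₀ A 1 = A := by
  ext p q
  simp [gmul, Matrix.one_apply, Prod.ext_iff, ite_and]

lemma gmul_P_apply (B : Mat M N) (p q) :
    gmul M N θ₀ (P M N θ₀) B p q =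
      (-1 : ℂ) ^ ((gr M N θ₀ p.2 + gr M N θ₀ p.1) * (gr M N θ₀ p.2 + gr M N θ₀ q.1)) *
        (-1) ^ gr M N θ₀ p.2 * B (p.2, p.1) q := by
  simp [gmul, P, ite_and, Finset.sum_ite_eq', eq_comm]

lemma gmul_apply_P (A : Mat M N) (p q) :
    gmul M N θ₀ A (P M N θ₀) p q =
      (-1 : ℂ) ^ ((gr M N θ₀ p.2 + gr M N θ₀ q.1) * (gr M N θ₀ q.2 + gr M N θ₀ q.1)) *
        A p (q.2, q.1) * (-1) ^ gr M N θ₀ q.1 := by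
  simp [gmul, P, ite_and, Finset.sum_ite_eq']

lemma gmul_P_P : gmul M N θ₀ (P M N θ₀) (P M N θ₀) = 1 := by
  ext p q
  rw [gmul_P_apply]
  by_cases h : p = q
  · subst h
    simp only [P, and_self, if_true, Matrix.one_apply_eq]
    rw [mul_assoc, ← pow_add]
    exact neg_one_pow_mul_self_mul _
  · have hne : ¬(p.2 = q.2 ∧ p.1 = q.1) := fun ⟨h₂, h₁⟩ => h (Prod.ext h₁ h₂)
    simp [P, Matrix.one_apply_ne h, hne]

lemma gmul_K_apply (B : Mat M N) (p q) :
    gmul M N θ₀ (K M N θ₀) B p q =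
      ∑ l, (-1 : ℂ) ^ ((gr M N θ₀ p.2 + gr M N θ₀ l) * (gr M N θ₀ (bar M N l) + gr M N θ₀ q.1)) *
        K M N θ₀ p (bar M N l, l) * B (bar M N l, l) q := by
  rw [gmul, Finset.sum_comm]
  refine Finset.sum_congr rfl fun l _ => Finset.sum_eq_single _ (fun j _ hj => ?_) (by simp)
  simp [K, hj]

section

variable {M N θ₀}

lemma gmul_P_K (hθ : θ₀ = 1 ∨ θ₀ = -1) (hN : Even N) :
    gmul M N θ₀ (P M N θ₀) (K M N θ₀) = (θ₀ : ℂ) • K M N θ₀ := by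
  ext ⟨i, k⟩ ⟨j, l⟩
  rw [gmul_P_apply, Matrix.smul_apply, smul_eq_mul]
  by_cases hi : i = bar M N k
  swap; · simp [K, hi, show k ≠ bar M N i from fun h => hi ((eq_bar_comm M N).mp h)]
  by_cases hj : j = bar M N l
  swap; · simp [K, hj]
  subst hi hj
  simp only [K, bar_bar, gr_bar, and_self, ↓reduceIte, Even.add_self, Even.mul_right, Even.neg_pow,
    one_pow, one_mul]
  linear_combination (-1 : ℂ) ^ (gr M N θ₀ l * gr M N θ₀ k) * th M N l *
    neg_one_pow_gr_mul_th_bar M N θ₀ hθ hN k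

lemma gmul_K_P (hθ : θ₀ = 1 ∨ θ₀ = -1) (hN : Even N) :
    gmul M N θ₀ (K M N θ₀) (P M N θ₀) = (θ₀ : ℂ) • K M N θ₀ := by
  ext ⟨i, k⟩ ⟨j, l⟩
  rw [gmul_apply_P, Matrix.smul_apply, smul_eq_mul]
  by_cases hi : i = bar M N k
  swap; · simp [K, hi]
  by_cases hj : j = bar M N l
  swap; · simp [K, hj, show l ≠ bar M N j from fun h => hj ((eq_bar_comm M N).mp h)]
  subst hi hj
  simp only [K, bar_bar, gr_bar, and_self, ↓reduceIte, Even.add_self, Even.mul_left, Even.neg_pow,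
    one_pow, one_mul]
  linear_combination (-1 : ℂ) ^ (gr M N θ₀ l * gr M N θ₀ k) * th M N k *
    neg_one_pow_gr_mul_th_bar M N θ₀ hθ hN l

lemma gmul_K_K (hθ : θ₀ = 1 ∨ θ₀ = -1) :
    gmul M N θ₀ (K M N θ₀) (K M N θ₀) = (θ₀ * ((M : ℂ) - N)) • K M N θ₀ := by
  ext ⟨i, k⟩ ⟨j, l⟩
  rw [gmul_K_apply, Matrix.smul_apply, smul_eq_mul]
  by_cases hi : i = bar M N k
  swap; · simp [K, hi]
  by_cases hj : j = bar M N l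
  swap; · simp [K, hj]
  subst hi hj
  simp only [K, gr_bar, and_self, if_true]
  have hterm (m : Fin (M + N)) :
      (-1 : ℂ) ^ ((gr M N θ₀ k + gr M N θ₀ m) * (gr M N θ₀ m + gr M N θ₀ l)) *
          ((-1) ^ (gr M N θ₀ m * gr M N θ₀ k) * th M N m * th M N k) *
          ((-1) ^ (gr M N θ₀ l * gr M N θ₀ m) * th M N l * th M N m) =
        (-1) ^ (gr M N θ₀ l * gr M N θ₀ k) * th M N l * th M N k * (-1) ^ gr M N θ₀ m := by
    linear_combination th M N k * th M N l * th M N m ^ 2 *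
        neg_one_pow_add_mul_add (gr M N θ₀ k) (gr M N θ₀ m) (gr M N θ₀ l) +
      th M N k * th M N l * (-1) ^ (gr M N θ₀ l * gr M N θ₀ k) * (-1) ^ gr M N θ₀ m *
        th_mul_self M N m
  rw [Finset.sum_congr rfl fun m _ => hterm m, ← Finset.mul_sum, sum_neg_one_pow_gr M N θ₀ hθ]
  ring

end

/-- unitarity `R₁₂(u) R₁₂(-u) = (1 - 1/u²) I`. -/
theorem statement10 (hθ : θ₀ = 1 ∨ θ₀ = -1) (hN : Even N)
    (u : ℂ) (hu : u ≠ 0) (huk : u + kap M N θ₀ ≠ 0) (huk' : u - kap M N θ₀ ≠ 0) :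
    gmul M N θ₀ (R M N θ₀ u) (R M N θ₀ (-u)) = (1 - 1 / u ^ 2) • (1 : Mat M N) := by
  have hκ : 2 * kap M N θ₀ = ((M : ℂ) - N - 2) * θ₀ := by rw [kap]; ring
  exact unitarity_of_relations (gmulₗ M N θ₀) (gmul_one_left M N θ₀) (gmul_one_right M N θ₀)
    (gmul_P_P M N θ₀) (gmul_P_K hθ hN) (gmul_K_P hθ hN) (gmul_K_K hθ) hκ hu huk huk'

end OspYangian
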